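/- Let f, h : ℝⁿ → ℝ ∪ {+∞} be proper lower semicontinuous convex with dom h ⊆ dom f, λ > 0, x₀ ∈ dom h, h^λ(u) = h(u) + ‖u − x₀‖²/(2λ), and ψ(z) = (h^λ)*(−z) + f*(z). Note (h^λ)* is λ-smooth since h^λ is (1/λ)-strongly convex. Let z ∈ dom f*, let z̄ be a minimizer of w ↦ ⟨−∇(h^λ)*(−z), w⟩ + f*(w), and let S(z) = sup_w ( −⟨∇(h^λ)*(−z), z − w⟩ + f*(z) − f*(w) ) be the Wolfe gap. Then for every τ ∈ [0,1], ψ(τ z + (1 − τ) z̄) ≤ ψ(z) − (1 − τ) S(z) + ((1 − τ)² λ / 2) ‖z̄ − z‖². -/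

import Mathlib

open RealInnerProductSpace

/-- Fenchel conjugate of a function `g` with effective domain `dom`:
`g*(s) = sup_{u ∈ dom} (⟨s, u⟩ - g u)`, valued in the extended reals. -/
noncomputable def fconj {n : ℕ} (dom : Set (EuclideanSpace ℝ (Fin n)))
    (g : EuclideanSpace ℝ (Fin n) → ℝ) (s : EuclideanSpace ℝ (Fin n)) : EReal :=
  ⨆ u ∈ dom, ((⟪s, u⟫ - g u : ℝ) : EReal)

private lemma ereal_coe_sub_top (a : ℝ) : (a : EReal) - ⊤ = ⊥ := by
  show (a : EReal) + -⊤ = ⊥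
  simp

private lemma aux_limit (L R K : ℝ) (hK : 0 ≤ K)
    (h : ∀ t : ℝ, 0 < t → t < 1 → L + K ≤ R + t * K) : L + K ≤ R := by
  rcases hK.lt_or_eq with hKpos | hK0
  · by_contra hcon
    push_neg at hcon
    set D := L + K - R with hDdef
    have hD : 0 < D := by rw [hDdef]; linarith
    have hKne : K ≠ 0 := hKpos.ne'
    have ht0pos : 0 < min (1/2) (D / (2 * K)) := lt_min (by norm_num) (by positivity)
    have ht0lt : min (1/2) (D / (2 * K)) < 1 :=
      lt_of_le_of_lt (min_le_left _ _) (by norm_num)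
    have h1 := h _ ht0pos ht0lt
    have h2 : min (1/2) (D / (2 * K)) * K ≤ D / (2 * K) * K :=
      mul_le_mul_of_nonneg_right (min_le_right _ _) hK
    have h3 : D / (2 * K) * K = D / 2 := by field_simp
    rw [h3] at h2
    linarith
  · have h12 := h (1/2) (by norm_num) (by norm_num)
    linarith [hK0]

private lemma aux_young (lam a b : ℝ) (hlam : 0 < lam) :
    a * b ≤ lam / 2 * a ^ 2 + b ^ 2 / (2 * lam) := by
  have h2l : (0:ℝ) < 2 * lam := by linarith
  rw [← sub_le_iff_le_add', le_div_iff₀ h2l]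
  nlinarith [sq_nonneg (lam * a - b)]

private lemma le_fconj {n : ℕ} {dom : Set (EuclideanSpace ℝ (Fin n))}
    {g : EuclideanSpace ℝ (Fin n) → ℝ} {s u : EuclideanSpace ℝ (Fin n)} (hu : u ∈ dom) :
    ((⟪s, u⟫ - g u : ℝ) : EReal) ≤ fconj dom g s :=
  le_iSup₂_of_le u hu le_rfl

private lemma fconj_le {n : ℕ} {dom : Set (EuclideanSpace ℝ (Fin n))}
    {g : EuclideanSpace ℝ (Fin n) → ℝ} {s : EuclideanSpace ℝ (Fin n)} {c : EReal}
    (hc : ∀ u ∈ dom, ((⟪s, u⟫ - g u : ℝ) : EReal) ≤ c) : fconj dom g s ≤ c :=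
  iSup₂_le hc

/-- fundamental descent inequality of the conditional gradient method applied
to the dual `ψ(z) = (h^λ)*(-z) + f*(z)` of the proximal subproblem:
`ψ(τ z + (1-τ) z̄) ≤ ψ(z) - (1-τ) S(z) + ((1-τ)² λ / 2) ‖z̄ - z‖²`. -/
theorem stmt7 {n : ℕ} (f h : EuclideanSpace ℝ (Fin n) → ℝ)
    (domf domh : Set (EuclideanSpace ℝ (Fin n)))
    (hdom : domh ⊆ domf)
    (hfconv : ConvexOn ℝ domf f) (hflsc : LowerSemicontinuousOn f domf)
    (hhconv : ConvexOn ℝ domh h) (hhlsc : LowerSemicontinuousOn h domh)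
    (x₀ : EuclideanSpace ℝ (Fin n)) (hx₀ : x₀ ∈ domh)
    (lam : ℝ) (hlam : 0 < lam)
    (z : EuclideanSpace ℝ (Fin n))
    -- z ∈ dom f*
    (hz : fconj domf f z ≠ ⊤)
    (x : EuclideanSpace ℝ (Fin n)) (hx : x ∈ domh)
    -- x = ∇(h^λ)*(-z): x is the unique maximizer of u ↦ ⟨-z, u⟩ - h^λ(u)
    (hxmax : ∀ u ∈ domh,
      ⟪-z, u⟫ - (h u + ‖u - x₀‖ ^ 2 / (2 * lam))
        ≤ ⟪-z, x⟫ - (h x + ‖x - x₀‖ ^ 2 / (2 * lam)))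
    (hxuniq : ∀ u ∈ domh,
      ⟪-z, u⟫ - (h u + ‖u - x₀‖ ^ 2 / (2 * lam))
        = ⟪-z, x⟫ - (h x + ‖x - x₀‖ ^ 2 / (2 * lam)) → u = x)
    (zbar : EuclideanSpace ℝ (Fin n))
    -- z̄ minimizes w ↦ ⟨-∇(h^λ)*(-z), w⟩ + f*(w)
    (hzbar : ∀ w, ((⟪-x, zbar⟫ : ℝ) : EReal) + fconj domf f zbar
      ≤ ((⟪-x, w⟫ : ℝ) : EReal) + fconj domf f w) :
    ∀ τ : ℝ, τ ∈ Set.Icc (0 : ℝ) 1 →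
      fconj domh (fun u => h u + ‖u - x₀‖ ^ 2 / (2 * lam)) (-(τ • z + (1 - τ) • zbar))
          + fconj domf f (τ • z + (1 - τ) • zbar)
        ≤ (fconj domh (fun u => h u + ‖u - x₀‖ ^ 2 / (2 * lam)) (-z) + fconj domf f z)
            - ((1 - τ : ℝ) : EReal)
              * (⨆ w : EuclideanSpace ℝ (Fin n),
                  (((-⟪x, z - w⟫ : ℝ) : EReal) + fconj domf f z - fconj domf f w))
            + (((1 - τ) ^ 2 * lam / 2 * ‖zbar - z‖ ^ 2 : ℝ) : EReal) := by
  intro τ hτ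
  obtain ⟨hτ0, hτ1⟩ := hτ
  -- f* never ⊥
  have hnbot : ∀ w, fconj domf f w ≠ ⊥ := by
    intro w hb
    have hle : ((⟪w, x₀⟫ - f x₀ : ℝ) : EReal) ≤ fconj domf f w := le_fconj (hdom hx₀)
    rw [hb] at hle
    exact (EReal.coe_ne_bot _) (le_bot_iff.mp hle)
  set A : ℝ := (fconj domf f z).toReal with hAdef
  have hA : fconj domf f z = (A : EReal) := (EReal.coe_toReal hz (hnbot z)).symm
  -- f* zbar is finite
  have hBtop : fconj domf f zbar ≠ ⊤ := by
    intro hT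
    have hle := hzbar z
    rw [hT, hA] at hle
    have e1 : ((⟪-x, zbar⟫ : ℝ) : EReal) + ⊤ = ⊤ := by simp
    have e2 : ((⟪-x, z⟫ : ℝ) : EReal) + (A : EReal) = ((⟪-x, z⟫ + A : ℝ) : EReal) := by norm_cast
    rw [e1, e2] at hle
    exact (EReal.coe_ne_top _) (top_le_iff.mp hle)
  set B : ℝ := (fconj domf f zbar).toReal with hBdef
  have hB : fconj domf f zbar = (B : EReal) := (EReal.coe_toReal hBtop (hnbot zbar)).symm
  -- per-point bounds for f*
  have hAub : ∀ u ∈ domf, ⟪z, u⟫ - f u ≤ A := by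
    intro u hu
    have hle : ((⟪z, u⟫ - f u : ℝ) : EReal) ≤ fconj domf f z := le_fconj hu
    rw [hA] at hle; exact_mod_cast hle
  have hBub : ∀ u ∈ domf, ⟪zbar, u⟫ - f u ≤ B := by
    intro u hu
    have hle : ((⟪zbar, u⟫ - f u : ℝ) : EReal) ≤ fconj domf f zbar := le_fconj hu
    rw [hB] at hle; exact_mod_cast hle
  -- H*(-z) is attained at x
  have hP : fconj domh (fun u => h u + ‖u - x₀‖ ^ 2 / (2 * lam)) (-z)
      = ((⟪-z, x⟫ - (h x + ‖x - x₀‖ ^ 2 / (2 * lam)) : ℝ) : EReal) := by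
    apply le_antisymm
    · exact fconj_le fun u hu => EReal.coe_le_coe_iff.2 (hxmax u hu)
    · exact le_fconj (g := fun u => h u + ‖u - x₀‖ ^ 2 / (2 * lam)) (s := -z) hx
  -- strong concavity: quadratic growth at the maximizer
  have key : ∀ u ∈ domh,
      (⟪-z, u⟫ - (h u + ‖u - x₀‖ ^ 2 / (2 * lam))) + ‖u - x‖ ^ 2 / (2 * lam)
        ≤ ⟪-z, x⟫ - (h x + ‖x - x₀‖ ^ 2 / (2 * lam)) := by
    intro u hu
    have hK0 : (0:ℝ) ≤ ‖u - x‖ ^ 2 / (2 * lam) := by positivity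
    apply aux_limit _ _ _ hK0
    intro t ht0 ht1
    have h1t : (0:ℝ) < 1 - t := by linarith
    have hutm : t • u + (1 - t) • x ∈ domh := hhconv.1 hu hx ht0.le h1t.le (by ring)
    have hconv : h (t • u + (1 - t) • x) ≤ t * h u + (1 - t) * h x :=
      hhconv.2 hu hx ht0.le h1t.le (by ring)
    have hid : ‖(t • u + (1 - t) • x) - x₀‖ ^ 2
        = t * ‖u - x₀‖ ^ 2 + (1 - t) * ‖x - x₀‖ ^ 2 - t * (1 - t) * ‖u - x‖ ^ 2 := by
      have h1 : (t • u + (1 - t) • x) - x₀ = t • (u - x₀) + (1 - t) • (x - x₀) := by module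
      have h2 : u - x = (u - x₀) - (x - x₀) := by module
      have e1 : ‖t • (u - x₀) + (1 - t) • (x - x₀)‖ ^ 2
          = t ^ 2 * ‖u - x₀‖ ^ 2 + 2 * (t * ((1 - t) * ⟪u - x₀, x - x₀⟫))
            + (1 - t) ^ 2 * ‖x - x₀‖ ^ 2 := by
        rw [norm_add_sq_real, real_inner_smul_left, real_inner_smul_right, norm_smul,
          norm_smul, Real.norm_eq_abs, Real.norm_eq_abs, abs_of_pos ht0, abs_of_pos h1t]
        ring
      have e2 : ‖(u - x₀) - (x - x₀)‖ ^ 2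
          = ‖u - x₀‖ ^ 2 - 2 * ⟪u - x₀, x - x₀⟫ + ‖x - x₀‖ ^ 2 := norm_sub_sq_real _ _
      rw [h1, e1, h2, e2]; ring
    have hinner : ⟪-z, t • u + (1 - t) • x⟫ = t * ⟪-z, u⟫ + (1 - t) * ⟪-z, x⟫ := by
      rw [inner_add_right, real_inner_smul_right, real_inner_smul_right]
    have hmax := hxmax _ hutm
    rw [hinner, hid] at hmax
    have hdistrib : (t * ‖u - x₀‖ ^ 2 + (1 - t) * ‖x - x₀‖ ^ 2
          - t * (1 - t) * ‖u - x‖ ^ 2) / (2 * lam)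
        = t * (‖u - x₀‖ ^ 2 / (2 * lam)) + (1 - t) * (‖x - x₀‖ ^ 2 / (2 * lam))
          - t * (1 - t) * (‖u - x‖ ^ 2 / (2 * lam)) := by ring
    rw [hdistrib] at hmax
    have hmul : t * ((⟪-z, u⟫ - (h u + ‖u - x₀‖ ^ 2 / (2 * lam))) + ‖u - x‖ ^ 2 / (2 * lam))
        ≤ t * ((⟪-z, x⟫ - (h x + ‖x - x₀‖ ^ 2 / (2 * lam))) + t * (‖u - x‖ ^ 2 / (2 * lam))) := by
      nlinarith [hmax, hconv]
    exact le_of_mul_le_mul_left hmul ht0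
  -- smoothness bound on H* at the shifted point
  have hdnorm : ‖(1 - τ) • (z - zbar)‖ = (1 - τ) * ‖zbar - z‖ := by
    rw [norm_smul, Real.norm_eq_abs, abs_of_nonneg (by linarith : (0:ℝ) ≤ 1 - τ), norm_sub_rev]
  have hHbound : fconj domh (fun u => h u + ‖u - x₀‖ ^ 2 / (2 * lam)) (-(τ • z + (1 - τ) • zbar))
      ≤ (((⟪-z, x⟫ - (h x + ‖x - x₀‖ ^ 2 / (2 * lam))) + (1 - τ) * ⟪x, z - zbar⟫
          + (1 - τ) ^ 2 * lam / 2 * ‖zbar - z‖ ^ 2 : ℝ) : EReal) := by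
    apply fconj_le
    intro u hu
    rw [EReal.coe_le_coe_iff]
    have hsplit : -(τ • z + (1 - τ) • zbar) = -z + (1 - τ) • (z - zbar) := by module
    rw [hsplit, inner_add_left]
    have h1 := key u hu
    have h2 : ⟪(1 - τ) • (z - zbar), u⟫
        = ⟪(1 - τ) • (z - zbar), x⟫ + ⟪(1 - τ) • (z - zbar), u - x⟫ := by
      rw [← inner_add_right]; congr 1; module
    have h3 : ⟪(1 - τ) • (z - zbar), u - x⟫ ≤ ‖(1 - τ) • (z - zbar)‖ * ‖u - x‖ :=
      real_inner_le_norm _ _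
    have h4 := aux_young lam ‖(1 - τ) • (z - zbar)‖ ‖u - x‖ hlam
    have h5 : ⟪(1 - τ) • (z - zbar), x⟫ = (1 - τ) * ⟪x, z - zbar⟫ := by
      rw [real_inner_smul_left, real_inner_comm]
    have h6 : lam / 2 * ‖(1 - τ) • (z - zbar)‖ ^ 2
        = (1 - τ) ^ 2 * lam / 2 * ‖zbar - z‖ ^ 2 := by
      rw [hdnorm]; ring
    linarith
  -- bound on f* at the shifted point
  have hFbound : fconj domf f (τ • z + (1 - τ) • zbar) ≤ ((τ * A + (1 - τ) * B : ℝ) : EReal) := by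
    apply fconj_le
    intro u hu
    rw [EReal.coe_le_coe_iff]
    have h1 : ⟪τ • z + (1 - τ) • zbar, u⟫ = τ * ⟪z, u⟫ + (1 - τ) * ⟪zbar, u⟫ := by
      rw [inner_add_left, real_inner_smul_left, real_inner_smul_left]
    rw [h1]
    have h2 := mul_le_mul_of_nonneg_left (hAub u hu) hτ0
    have h3 := mul_le_mul_of_nonneg_left (hBub u hu) (by linarith : (0:ℝ) ≤ 1 - τ)
    nlinarith [h2, h3]
  -- the Wolfe gap equals S₀
  have hS : (⨆ w : EuclideanSpace ℝ (Fin n),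
      (((-⟪x, z - w⟫ : ℝ) : EReal) + fconj domf f z - fconj domf f w))
      = ((-⟪x, z - zbar⟫ + A - B : ℝ) : EReal) := by
    apply le_antisymm
    · apply iSup_le
      intro w
      by_cases hw : fconj domf f w = ⊤
      · rw [hw, hA]
        calc ((-⟪x, z - w⟫ : ℝ) : EReal) + (A : EReal) - ⊤
            = ((-⟪x, z - w⟫ + A : ℝ) : EReal) - ⊤ := by norm_cast
          _ = ⊥ := ereal_coe_sub_top _
          _ ≤ _ := bot_le
      · have hC : fconj domf f w = (((fconj domf f w).toReal : ℝ) : EReal) :=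
          (EReal.coe_toReal hw (hnbot w)).symm
        set C : ℝ := (fconj domf f w).toReal with hCdef
        have hzw := hzbar w
        rw [hB, hC] at hzw
        have hzw' : ⟪-x, zbar⟫ + B ≤ ⟪-x, w⟫ + C := by exact_mod_cast hzw
        rw [hA, hC]
        have heq : ((-⟪x, z - w⟫ : ℝ) : EReal) + (A : EReal) - (C : EReal)
            = ((-⟪x, z - w⟫ + A - C : ℝ) : EReal) := by norm_cast
        rw [heq, EReal.coe_le_coe_iff]
        have e1 : ⟪x, z - w⟫ = ⟪x, z⟫ - ⟪x, w⟫ := inner_sub_right x z w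
        have e2 : ⟪x, z - zbar⟫ = ⟪x, z⟫ - ⟪x, zbar⟫ := inner_sub_right x z zbar
        have e3 : ⟪-x, zbar⟫ = -⟪x, zbar⟫ := inner_neg_left x zbar
        have e4 : ⟪-x, w⟫ = -⟪x, w⟫ := inner_neg_left x w
        rw [e3, e4] at hzw'
        linarith [hzw', e1, e2]
    · have hle : ((-⟪x, z - zbar⟫ + A - B : ℝ) : EReal)
          ≤ ((-⟪x, z - zbar⟫ : ℝ) : EReal) + fconj domf f z - fconj domf f zbar := by
        rw [hA, hB]
        rw [show ((-⟪x, z - zbar⟫ : ℝ) : EReal) + (A : EReal) - (B : EReal)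
            = ((-⟪x, z - zbar⟫ + A - B : ℝ) : EReal) by norm_cast]
      exact le_trans hle (le_iSup
        (fun w => (((-⟪x, z - w⟫ : ℝ) : EReal) + fconj domf f z - fconj domf f w)) zbar)
  -- assemble
  rw [hS, hP, hA]
  calc fconj domh (fun u => h u + ‖u - x₀‖ ^ 2 / (2 * lam)) (-(τ • z + (1 - τ) • zbar))
        + fconj domf f (τ • z + (1 - τ) • zbar)
      ≤ (((⟪-z, x⟫ - (h x + ‖x - x₀‖ ^ 2 / (2 * lam))) + (1 - τ) * ⟪x, z - zbar⟫
          + (1 - τ) ^ 2 * lam / 2 * ‖zbar - z‖ ^ 2 : ℝ) : EReal)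
        + ((τ * A + (1 - τ) * B : ℝ) : EReal) := add_le_add hHbound hFbound
    _ = ((((⟪-z, x⟫ - (h x + ‖x - x₀‖ ^ 2 / (2 * lam))) + (1 - τ) * ⟪x, z - zbar⟫
          + (1 - τ) ^ 2 * lam / 2 * ‖zbar - z‖ ^ 2) + (τ * A + (1 - τ) * B) : ℝ) : EReal) := by
        norm_cast
    _ ≤ _ := by
        rw [show (((⟪-z, x⟫ - (h x + ‖x - x₀‖ ^ 2 / (2 * lam)) : ℝ) : EReal) + (A : EReal))
              - ((1 - τ : ℝ) : EReal) * ((-⟪x, z - zbar⟫ + A - B : ℝ) : EReal)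
              + (((1 - τ) ^ 2 * lam / 2 * ‖zbar - z‖ ^ 2 : ℝ) : EReal)
            = (((⟪-z, x⟫ - (h x + ‖x - x₀‖ ^ 2 / (2 * lam)) + A)
              - (1 - τ) * (-⟪x, z - zbar⟫ + A - B)
              + (1 - τ) ^ 2 * lam / 2 * ‖zbar - z‖ ^ 2 : ℝ) : EReal) by norm_cast]
        rw [EReal.coe_le_coe_iff]
        exact le_of_eq (by ring)
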